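/- arXiv:1304.8046 — 2 statements merged into one kernel-verified Lean document; each statement's English description precedes it below -/
import Mathlib

section
/- There is a constant c' such that for every positive integer k and every binary string x with k + ⌊log₂ k⌋ ≤ |x|, the sophistication of x at (integer) significance |x| − C(x) − ⌊log₂ k⌋ + c' is at most k + c', i.e. soph_{|x| − C(x) − ⌊log₂ k⌋ + c'}(x) ≤ k + c'. -/
/-- Bijective binary encoding of binary strings as natural numbers. -/
def strToNat : List Bool → ℕ
  | [] => 0
  | b :: t => (if b then 2 else 1) + 2 * strToNat t

/-- The partial result of running machine `M` on program `p` and auxiliary input `d`. -/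
def evalS (M : Nat.Partrec.Code) (p d : List Bool) : Part ℕ :=
  M.eval (Nat.pair (strToNat p) (strToNat d))

/-- `M(p, d) = x`. -/
def outputs (M : Nat.Partrec.Code) (p d x : List Bool) : Prop :=
  strToNat x ∈ evalS M p d

/-- `M` halts on program `p` (with empty auxiliary input). -/
def haltsOn (M : Nat.Partrec.Code) (p : List Bool) : Prop :=
  (evalS M p []).Dom

/-- The number of computation steps taken by `M` on program `p` (with empty auxiliary
input); meaningful only when `M` halts on `p`. -/
noncomputable def halttime (M : Nat.Partrec.Code) (p : List Bool) : ℕ :=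
  sInf {t | (Nat.Partrec.Code.evaln t M (Nat.pair (strToNat p) 0)).isSome}

/-- `M` is a universal machine: it simulates every machine `V` via a prefix `w_V`. -/
def Universal (M : Nat.Partrec.Code) : Prop :=
  ∀ V : Nat.Partrec.Code, ∃ w : List Bool, ∀ p y : List Bool,
    (evalS V p y).Dom → evalS M (w ++ p) y = evalS V p y

/-- Plain Kolmogorov complexity `C(x)` on machine `M`. -/
noncomputable def Cpx (M : Nat.Partrec.Code) (x : List Bool) : ℕ :=
  sInf {n | ∃ p : List Bool, p.length = n ∧ outputs M p [] x}

/-- Sophistication of `x` at (integer) significance level `c`. -/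
noncomputable def soph (M : Nat.Partrec.Code) (c : ℤ) (x : List Bool) : ℕ :=
  sInf {n | ∃ p : List Bool, p.length = n ∧ (∀ d : List Bool, (evalS M p d).Dom) ∧
    ∃ d : List Bool, outputs M p d x ∧ (p.length + d.length : ℤ) ≤ (Cpx M x : ℤ) + c}

/-- Logical depth of `x` at significance level `c`. -/
noncomputable def ld (M : Nat.Partrec.Code) (c : ℕ) (x : List Bool) : ℕ :=
  sInf {t | ∃ p : List Bool, p.length ≤ Cpx M x + c ∧ outputs M p [] x ∧ halttime M p = t}

/-- The inverse Busy Beaver function `bb(n)`. -/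
noncomputable def bbInv (M : Nat.Partrec.Code) (n : ℕ) : ℕ :=
  sInf {k | ∃ p : List Bool, p.length = k ∧ haltsOn M p ∧ n ≤ halttime M p}

/-- Busy Beaver logical depth of `x` at significance `c`. -/
noncomputable def ldbb (M : Nat.Partrec.Code) (c : ℕ) (x : List Bool) : ℕ :=
  bbInv M (ld M c x)

/-- The Busy Beaver function `BB(l)`. -/
noncomputable def BB (M : Nat.Partrec.Code) (l : ℕ) : ℕ :=
  sSup {t | ∃ p : List Bool, p.length ≤ l ∧ haltsOn M p ∧ halttime M p = t}

/-- Canonical encoding of a finite set of binary strings: the code of the sorted list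
of the codes of its elements. -/
def setCode (S : Finset (List Bool)) : ℕ :=
  Encodable.encode ((S.image strToNat).sort (· ≤ ·))

/-- Kolmogorov complexity `C(S)` of a finite set of binary strings on machine `M`. -/
noncomputable def CSet (M : Nat.Partrec.Code) (S : Finset (List Bool)) : ℕ :=
  sInf {n | ∃ p : List Bool, p.length = n ∧ setCode S ∈ evalS M p []}

/-- Conditional Kolmogorov complexity `C(x | m)` where the condition is a natural number. -/
noncomputable def CpxCondN (M : Nat.Partrec.Code) (x : List Bool) (m : ℕ) : ℕ :=
  sInf {n | ∃ p : List Bool, p.length = n ∧ strToNat x ∈ M.eval (Nat.pair (strToNat p) m)}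

/-!
The last `L = ⌊log₂ k⌋ - 1` bits `e` of `x` code a number `j < k`; write `x = p ++ d ++ e`
with `|p| = j`. The total machine `V` with `V(p, d) = p ++ d ++ (the string coding |p|)` is
simulated by `U` through a prefix `w`, so `(w ++ p, d)` is a two-part description of `x` by a
total program of length `|w| + j ≤ |w| + k`, whose total length `|w| + |x| - L` is short enough.
-/

lemma strToNat_append (s t : List Bool) :
    strToNat (s ++ t) = strToNat s + 2 ^ s.length * strToNat t := by
  induction s with
  | nil => simp [strToNat]
  | cons b s ih => simp only [List.cons_append, strToNat, ih, List.length_cons, pow_succ]; ring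

lemma two_pow_length_le_strToNat_succ (s : List Bool) : 2 ^ s.length ≤ strToNat s + 1 := by
  induction s with
  | nil => simp [strToNat]
  | cons b s ih => cases b <;> simp [strToNat, pow_succ] <;> omega

lemma strToNat_succ_lt_two_pow (s : List Bool) : strToNat s + 1 < 2 ^ (s.length + 1) := by
  induction s with
  | nil => simp [strToNat]
  | cons b s ih => cases b <;> simp [strToNat, pow_succ] at ih ⊢ <;> omega

/-- The length of the string coded by `n`. -/
def codedLength (n : ℕ) : ℕ := Nat.log 2 (n + 1)

lemma codedLength_strToNat (s : List Bool) : codedLength (strToNat s) = s.length :=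
  Nat.log_eq_of_pow_le_of_lt_pow (two_pow_length_le_strToNat_succ s) (strToNat_succ_lt_two_pow s)

lemma Primrec.nat_pow : Primrec₂ ((· ^ ·) : ℕ → ℕ → ℕ) :=
  Primrec₂.unpaired'.mp Nat.Primrec.pow

lemma primrec_codedLength : Primrec codedLength := by
  have hgraph : PrimrecRel fun a b : ℕ => 2 ^ b ≤ a + 1 ∧ a + 1 < 2 ^ (b + 1) :=
    .and (Primrec.nat_le.comp (Primrec.nat_pow.comp (.const 2) .snd) (Primrec.succ.comp .fst))
      (Primrec.nat_lt.comp (Primrec.succ.comp .fst)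
        (Primrec.nat_pow.comp (.const 2) (Primrec.succ.comp .snd)))
  refine Primrec.of_graph ⟨Nat.succ, .succ, fun n => Nat.log_le_self 2 (n + 1)⟩ ?_
  exact hgraph.of_eq fun a b => (Nat.log_eq_iff (Or.inr ⟨one_lt_two, a.succ_ne_zero⟩)).symm

/-- Concatenation of strings, read on their codes. -/
def concatCode (a b : ℕ) : ℕ := a + 2 ^ codedLength a * b

lemma strToNat_append_eq_concatCode (s t : List Bool) :
    strToNat (s ++ t) = concatCode (strToNat s) (strToNat t) := by
  rw [strToNat_append, concatCode, codedLength_strToNat]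

lemma primrec₂_concatCode : Primrec₂ concatCode :=
  Primrec.nat_add.comp .fst
    (Primrec.nat_mul.comp (Primrec.nat_pow.comp (.const 2) (primrec_codedLength.comp .fst)) .snd)

lemma exists_total_code_appending_length : ∃ V : Nat.Partrec.Code, (∀ n, (V.eval n).Dom) ∧
    ∀ p d e : List Bool, strToNat e = p.length → outputs V p d (p ++ d ++ e) := by
  let f (n : ℕ) : ℕ := concatCode n.unpair.1 (concatCode n.unpair.2 (codedLength n.unpair.1))
  have hf : Primrec f :=
    have h₁ : Primrec fun n : ℕ => n.unpair.1 := Primrec.fst.comp .unpair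
    have h₂ : Primrec fun n : ℕ => n.unpair.2 := Primrec.snd.comp .unpair
    primrec₂_concatCode.comp h₁
      (primrec₂_concatCode.comp h₂ (primrec_codedLength.comp h₁))
  obtain ⟨V, hV⟩ := Nat.Partrec.Code.exists_code.mp (Partrec.nat_iff.mp hf.to_comp)
  refine ⟨V, fun n => by simp [hV], fun p d e he => ?_⟩
  rw [outputs, evalS, hV]
  show _ ∈ Part.some (f _)
  simp only [f, Nat.unpair_pair, List.append_assoc, strToNat_append_eq_concatCode,
    codedLength_strToNat, he, Part.mem_some_iff]

lemma Universal.exists_prefix_of_total {U V : Nat.Partrec.Code} (hU : Universal U)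
    (hV : ∀ n, (V.eval n).Dom) : ∃ w : List Bool, ∀ p d, evalS U (w ++ p) d = evalS V p d :=
  let ⟨w, hw⟩ := hU V
  ⟨w, fun p d => hw p d (hV _)⟩

lemma soph_le_length {M : Nat.Partrec.Code} {c : ℤ} {x p d : List Bool}
    (htotal : ∀ d, (evalS M p d).Dom) (hout : outputs M p d x)
    (hlen : (p.length + d.length : ℤ) ≤ Cpx M x + c) : soph M c x ≤ p.length :=
  Nat.sInf_le ⟨p, rfl, htotal, d, hout, hlen⟩

lemma exists_append_strToNat_eq_length (x : List Bool) (L : ℕ)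
    (h : L + 2 ^ (L + 1) ≤ x.length + 2) :
    ∃ p d e : List Bool, p ++ d ++ e = x ∧ e.length = L ∧ strToNat e = p.length ∧
      p.length + 2 ≤ 2 ^ (L + 1) := by
  have hL : L ≤ x.length := by
    have := Nat.lt_two_pow_self (n := L)
    rw [pow_succ] at h
    omega
  set e := x.drop (x.length - L)
  have he : e.length = L := by simp only [e, List.length_drop]; omega
  have hj : strToNat e + 2 ≤ 2 ^ (L + 1) := he ▸ strToNat_succ_lt_two_pow e
  refine ⟨(x.take (x.length - L)).take (strToNat e), (x.take (x.length - L)).drop (strToNat e),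
    e, by rw [List.take_append_drop, List.take_append_drop], he, ?_, ?_⟩ <;>
  · simp only [List.length_take]
    omega

lemma two_pow_log_pred_succ_le {k : ℕ} (hk : 1 ≤ k) : 2 ^ (Nat.log 2 k - 1 + 1) ≤ k + 1 := by
  rcases (Nat.log 2 k).eq_zero_or_pos with h | h
  · simp only [h, zero_tsub, zero_add, pow_one]
    omega
  · rw [Nat.sub_add_cancel h]
    exact (Nat.pow_log_le_self 2 (by omega)).trans k.le_succ

theorem twopart_shorter :
    ∀ U : Nat.Partrec.Code, Universal U →
    ∃ c' : ℕ, ∀ k : ℕ, 1 ≤ k → ∀ x : List Bool, k + Nat.log 2 k ≤ x.length →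
      soph U ((x.length : ℤ) - Cpx U x - Nat.log 2 k + c') x ≤ k + c' := by
  intro U hU
  obtain ⟨V, hVtotal, hVout⟩ := exists_total_code_appending_length
  obtain ⟨w, hw⟩ := hU.exists_prefix_of_total hVtotal
  refine ⟨w.length + 1, fun k hk x hx => ?_⟩
  have hpow_le := two_pow_log_pred_succ_le hk
  obtain ⟨p, d, e, rfl, he, hep, hp⟩ :=
    exists_append_strToNat_eq_length x (Nat.log 2 k - 1) (by omega)
  refine (soph_le_length (p := w ++ p) (d := d) (fun d => ?_) ?_ ?_).trans ?_
  · rw [hw]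
    exact hVtotal _
  · rw [outputs, hw]
    exact hVout p d e hep
  · simp only [List.length_append]
    push_cast
    omega
  · simp only [List.length_append]
    omega
end

section
/- There is a constant c such that for every sufficiently large integer d and every natural number n there exists a binary string x of length n with C(x) ≥ n − d and ld^bb_{d − 2⌊log₂ d⌋ − c}(x) ≥ n − d. -/
/-!
Fix `d` and `n > d`, and let `T` be the largest running time of a halting program of length
`< n - d`; a program `q` attaining it is written in `n - d` bits as the clock `0^k 1 q`. One
machine, given `d` in self-delimiting form followed by this clock, runs `q` to learn `T` and
outputs a string `x` of length `n` that no program of length `≤ n - 3` outputs within `T` steps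
(one exists by counting). Through the universal machine, `x` has a program of length
`n - d + 2 log d + O(1)`, while every program of `x` shorter than `n - 2` runs longer than `T`,
and every halting program running longer than `T` has length `≥ n - d`. A shortest program of
`x` therefore has length `≥ n - d`; and at significance `d - 2 log d - O(1)` the programs
competing for `ld(x)` are shorter than `n - 2`, so `ld(x) > T` and `bb(ld(x)) ≥ n - d`.
-/

open Nat.Partrec (Code)

def natToStr : ℕ → List Bool
  | 0 => []
  | m + 1 => (m % 2 == 1) :: natToStr (m / 2)

@[simp]
lemma strToNat_nil : strToNat [] = 0 := rfl

lemma strToNat_cons (b : Bool) (t : List Bool) :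
    strToNat (b :: t) = (if b then 2 else 1) + 2 * strToNat t := rfl

@[simp]
lemma natToStr_strToNat (x : List Bool) : natToStr (strToNat x) = x := by
  induction x with
  | nil => simp [natToStr]
  | cons b t ih =>
    cases b
    · rw [strToNat_cons, if_neg Bool.false_ne_true, add_comm, natToStr]
      simp [ih]
    · rw [strToNat_cons, if_pos rfl, show 2 + 2 * strToNat t = (2 * strToNat t + 1) + 1 by omega,
        natToStr]
      have h2 : (2 * strToNat t + 1) / 2 = strToNat t := by omega
      simp [h2, ih]

@[simp]
lemma strToNat_natToStr (m : ℕ) : strToNat (natToStr m) = m := by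
  induction m using Nat.strong_induction_on with
  | _ m ih =>
    cases m with
    | zero => simp [natToStr]
    | succ m =>
      rw [natToStr, strToNat_cons, ih _ (by omega)]
      split <;> simp_all <;> omega

lemma two_pow_length_le (x : List Bool) : 2 ^ x.length ≤ strToNat x + 1 := by
  induction x with
  | nil => simp
  | cons b t ih =>
    rw [strToNat_cons, List.length_cons, pow_succ]
    cases b <;> simp <;> omega

lemma lt_two_pow_length_succ (x : List Bool) : strToNat x + 1 < 2 ^ (x.length + 1) := by
  induction x with
  | nil => simp
  | cons b t ih =>
    rw [strToNat_cons, List.length_cons, pow_succ]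
    cases b <;> simp <;> omega

lemma length_natToStr (m : ℕ) : (natToStr m).length = Nat.log 2 (m + 1) := by
  symm
  apply Nat.log_eq_of_pow_le_of_lt_pow
  · simpa using two_pow_length_le (natToStr m)
  · simpa using lt_two_pow_length_succ (natToStr m)

lemma length_natToStr_le_log {m : ℕ} (hm : m ≠ 0) :
    (natToStr m).length ≤ Nat.log 2 m + 1 := by
  rw [length_natToStr, ← Nat.log_mul_base (by norm_num) hm]
  exact Nat.log_mono_right (by omega)

lemma length_natToStr_eq {m n : ℕ} (h₁ : 2 ^ n ≤ m + 1) (h₂ : m + 1 < 2 ^ (n + 1)) :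
    (natToStr m).length = n := by
  rw [length_natToStr]
  exact Nat.log_eq_of_pow_le_of_lt_pow h₁ h₂

lemma strToNat_eq_foldr (x : List Bool) :
    strToNat x = x.foldr (fun b s => (if b then 2 else 1) + 2 * s) 0 := by
  induction x with
  | nil => rfl
  | cons b t ih => rw [strToNat_cons, ih, List.foldr_cons]

lemma primrec_strToNat : Primrec strToNat := by
  refine (Primrec.list_foldr
    (h := fun (_ : List Bool) (p : Bool × ℕ) => (if p.1 then 2 else 1) + 2 * p.2)
    Primrec.id (Primrec.const 0) ?_).of_eq fun x => (strToNat_eq_foldr x).symm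
  exact (Primrec.nat_add.comp
    (Primrec.ite (Primrec.eq.comp (Primrec.fst.comp Primrec.snd) (Primrec.const true))
      (Primrec.const 2) (Primrec.const 1))
    (Primrec.nat_mul.comp (Primrec.const 2) (Primrec.snd.comp Primrec.snd))).to₂

lemma primrec_natToStr : Primrec natToStr := by
  let step : Unit → List (List Bool) → Option (List Bool) := fun _ L =>
    if L.length = 0 then some []
    else L[(L.length - 1) / 2]?.map (List.cons ((L.length - 1) % 2 == 1))
  have hstep : Primrec₂ step := by
    have hlen : Primrec fun p : Unit × List (List Bool) => p.2.length - 1 :=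
      Primrec.nat_sub.comp (Primrec.list_length.comp Primrec.snd) (Primrec.const 1)
    refine Primrec.ite (Primrec.eq.comp (Primrec.list_length.comp Primrec.snd) (Primrec.const 0))
      (Primrec.const (some [])) (Primrec.option_map
        (Primrec.list_getElem?.comp Primrec.snd (Primrec.nat_div.comp hlen (Primrec.const 2)))
        (Primrec.list_cons.comp (Primrec.beq.comp
          (Primrec.nat_mod.comp (hlen.comp Primrec.fst) (Primrec.const 2)) (Primrec.const 1))
          Primrec.snd).to₂)
  have := Primrec.nat_strong_rec (fun (_ : Unit) => natToStr) hstep fun _ n => by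
    cases n with
    | zero => simp [step, natToStr]
    | succ n => simp [step, natToStr, List.getElem?_range (show n / 2 < n + 1 by omega)]
  exact this.comp (Primrec.const ()) Primrec.id

open Nat.Partrec.Code

lemma rfind_some_eq_some {p : ℕ → Bool} {m : ℕ} (hm : p m = true)
    (hlt : ∀ k < m, p k = false) :
    Nat.rfind (fun k => Part.some (p k)) = Part.some m :=
  Part.eq_some_iff.2 (Nat.mem_rfind.2 ⟨by simp [hm], fun hk => by simp [hlt _ hk]⟩)

section RunningTime

variable {U : Code} {p x : List Bool}

lemma haltsOn_of_outputs (h : outputs U p [] x) : haltsOn U p :=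
  Part.dom_iff_mem.2 ⟨_, h⟩

lemma evaln_halttime_isSome (h : haltsOn U p) :
    (evaln (halttime U p) U (Nat.pair (strToNat p) 0)).isSome := by
  obtain ⟨y, hy⟩ := Part.dom_iff_mem.1 h
  obtain ⟨t, ht⟩ := evaln_complete.1 hy
  exact Nat.sInf_mem (s := {t | (evaln t U (Nat.pair (strToNat p) 0)).isSome})
    ⟨t, Option.isSome_iff_exists.2 ⟨y, ht⟩⟩

lemma rfind_evaln_isSome (h : haltsOn U p) :
    Nat.rfind (fun t => Part.some (evaln t U (Nat.pair (strToNat p) 0)).isSome) =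
      Part.some (halttime U p) :=
  rfind_some_eq_some (evaln_halttime_isSome h) fun _ hk =>
    Bool.eq_false_iff.2 (Nat.notMem_of_lt_sInf hk)

lemma evaln_eq_of_halttime_le {T : ℕ} (h : outputs U p [] x) (hT : halttime U p ≤ T) :
    evaln T U (Nat.pair (strToNat p) 0) = some (strToNat x) := by
  obtain ⟨y, hy⟩ := Option.isSome_iff_exists.1 (evaln_halttime_isSome (haltsOn_of_outputs h))
  have hyx : y = strToNat x := Part.mem_unique (evaln_sound hy) h
  exact evaln_mono hT (hyx ▸ hy)

end RunningTime

def selfDelimit (u : List Bool) : List Bool :=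
  List.replicate u.length false ++ true :: u

def splitDelimited (p : List Bool) : List Bool × List Bool :=
  ((p.drop (p.idxOf true + 1)).take (p.idxOf true), p.drop (2 * p.idxOf true + 1))

lemma idxOf_replicate_false_append (k : ℕ) (z : List Bool) :
    (List.replicate k false ++ true :: z).idxOf true = k := by
  rw [List.idxOf_append_of_notMem (by simp), List.idxOf_cons_self]
  simp

lemma splitDelimited_selfDelimit_append (u r : List Bool) :
    splitDelimited (selfDelimit u ++ r) = (u, r) := by
  have hsplit : selfDelimit u ++ r = (List.replicate u.length false ++ [true]) ++ (u ++ r) := by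
    simp [selfDelimit]
  have hidx : (selfDelimit u ++ r).idxOf true = u.length := by
    rw [selfDelimit, List.append_assoc, List.cons_append, idxOf_replicate_false_append]
  rw [splitDelimited, hidx, hsplit, List.drop_left' (by simp), List.take_left' rfl,
    ← List.append_assoc, List.drop_left' (by simp; omega)]

lemma primrec_splitDelimited : Primrec splitDelimited := by
  have hk : Primrec fun p : List Bool => p.idxOf true :=
    Primrec.list_idxOf.comp (Primrec.const true) Primrec.id
  exact Primrec.pair
    (Primrec.list_take.comp hk (Primrec.list_drop.comp (Primrec.succ.comp hk) Primrec.id))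
    (Primrec.list_drop.comp (Primrec.succ.comp (Primrec.nat_double.comp hk)) Primrec.id)

/-- Reading `r` as `0^k 1 q`, the clock has run out at time `t` once `q` halts within `t` steps;
an `r` without a `1` stops the clock at once. -/
def clockHalted (U : Code) (r : List Bool) (t : ℕ) : Bool :=
  decide (r.length ≤ r.idxOf true) ||
    (evaln t U (Nat.pair (strToNat (r.drop (r.idxOf true + 1))) 0)).isSome

lemma primrec_clockHalted (U : Code) : Primrec₂ (clockHalted U) := by
  have hk : Primrec fun s : List Bool × ℕ => s.1.idxOf true :=
    Primrec.list_idxOf.comp (Primrec.const true) Primrec.fst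
  refine Primrec.or.comp
    (Primrec.nat_le.decide.comp (Primrec.list_length.comp Primrec.fst) hk)
    (Primrec.option_isSome.comp (primrec_evaln.comp (Primrec.pair
      (Primrec.pair Primrec.snd (Primrec.const U))
      (Primrec₂.natPair.comp (primrec_strToNat.comp
        (Primrec.list_drop.comp (Primrec.succ.comp hk) Primrec.fst)) (Primrec.const 0)))))

lemma rfind_clockHalted_replicate (U : Code) (m : ℕ) :
    Nat.rfind (fun t => Part.some (clockHalted U (List.replicate m false) t)) = Part.some 0 :=
  rfind_some_eq_some (by simp [clockHalted]) fun _ hk => absurd hk (Nat.not_lt_zero _)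

lemma rfind_clockHalted_marker {U : Code} {q : List Bool} (hq : haltsOn U q) (k : ℕ) :
    Nat.rfind (fun t => Part.some (clockHalted U (List.replicate k false ++ true :: q) t)) =
      Part.some (halttime U q) := by
  have hdrop : (List.replicate k false ++ true :: q).drop (k + 1) = q := by
    rw [show List.replicate k false ++ true :: q = (List.replicate k false ++ [true]) ++ q by simp,
      List.drop_left' (by simp)]
  have hnot : ¬ (List.replicate k false ++ true :: q).length ≤ k := by simp
  simpa [clockHalted, idxOf_replicate_false_append, hdrop, hnot] using rfind_evaln_isSome hq

/-- `v` codes a string of length `N` that no program of length at most `N - 3` (the programs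
with codes below `2 ^ (N - 2) - 1`) outputs within `T` steps. -/
def IsFresh (U : Code) (N T v : ℕ) : Prop :=
  2 ^ N ≤ v + 1 ∧ ∀ b < 2 ^ (N - 2) - 1, evaln T U (Nat.pair b 0) ≠ some v

instance (U : Code) (N T : ℕ) : DecidablePred (IsFresh U N T) := fun _ => by
  unfold IsFresh; infer_instance

lemma exists_isFresh (U : Code) (N T : ℕ) : ∃ v ≤ 2 ^ (N + 1) - 2, IsFresh U N T v := by
  let outputsOf : Finset ℕ :=
    (Finset.range (2 ^ (N - 2) - 1)).image fun b => (evaln T U (Nat.pair b 0)).getD 0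
  have hcard : outputsOf.card < (Finset.Ico (2 ^ N - 1) (2 ^ (N + 1) - 1)).card := by
    have h₁ : (2 : ℕ) ^ (N - 2) ≤ 2 ^ N := Nat.pow_le_pow_right (by norm_num) (by omega)
    have h₂ : (1 : ℕ) ≤ 2 ^ (N - 2) := Nat.one_le_two_pow
    have h₃ : outputsOf.card ≤ 2 ^ (N - 2) - 1 :=
      Finset.card_image_le.trans (Finset.card_range _).le
    rw [Nat.card_Ico, pow_succ]
    omega
  obtain ⟨v, hv, hvnot⟩ := Finset.exists_mem_notMem_of_card_lt_card hcard
  rw [Finset.mem_Ico] at hv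
  refine ⟨v, by omega, by omega, fun b hb hbv => hvnot ?_⟩
  exact Finset.mem_image.2 ⟨b, Finset.mem_range.2 hb, by simp [hbv]⟩

def freshOutput (U : Code) (N T : ℕ) : ℕ :=
  Nat.findGreatest (IsFresh U N T) (2 ^ (N + 1) - 2)

lemma isFresh_freshOutput (U : Code) (N T : ℕ) : IsFresh U N T (freshOutput U N T) :=
  let ⟨_, hv, hfresh⟩ := exists_isFresh U N T
  Nat.findGreatest_spec hv hfresh

lemma length_natToStr_freshOutput (U : Code) (N T : ℕ) :
    (natToStr (freshOutput U N T)).length = N :=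
  length_natToStr_eq (isFresh_freshOutput U N T).1
    (by have := Nat.findGreatest_le (P := IsFresh U N T) (2 ^ (N + 1) - 2)
        have := Nat.one_le_two_pow (n := N + 1)
        unfold freshOutput; omega)

lemma primrec_two_pow : Primrec (2 ^ · : ℕ → ℕ) :=
  (Primrec₂.unpaired'.1 Nat.Primrec.pow).comp (Primrec.const 2) Primrec.id

lemma primrecRel_isFresh (U : Code) :
    PrimrecRel fun (a : ℕ × ℕ) (v : ℕ) => IsFresh U a.1 a.2 v := by
  have hmiss : PrimrecRel fun (b : ℕ) (s : (ℕ × ℕ) × ℕ) =>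
      evaln s.1.2 U (Nat.pair b 0) ≠ some s.2 :=
    PrimrecPred.not (Primrec.eq.comp
      (primrec_evaln.comp (Primrec.pair (Primrec.pair (Primrec.snd.comp (Primrec.fst.comp
        Primrec.snd)) (Primrec.const U)) (Primrec₂.natPair.comp Primrec.fst (Primrec.const 0))))
      (Primrec.option_some.comp (Primrec.snd.comp Primrec.snd)))
  have hbound : Primrec fun s : (ℕ × ℕ) × ℕ => 2 ^ (s.1.1 - 2) - 1 :=
    Primrec.nat_sub.comp (primrec_two_pow.comp (Primrec.nat_sub.comp
      (Primrec.fst.comp Primrec.fst) (Primrec.const 2))) (Primrec.const 1)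
  have hunseen : PrimrecPred fun s : (ℕ × ℕ) × ℕ =>
      ∀ b < 2 ^ (s.1.1 - 2) - 1, evaln s.1.2 U (Nat.pair b 0) ≠ some s.2 :=
    ((PrimrecRel.forall_mem_list hmiss).comp (Primrec.list_range.comp hbound) Primrec.id).of_eq
      fun s => by simp
  exact PrimrecPred.and
    (Primrec.nat_le.comp (primrec_two_pow.comp (Primrec.fst.comp Primrec.fst))
      (Primrec.succ.comp Primrec.snd)) hunseen

lemma primrec_freshOutput (U : Code) : Primrec₂ (freshOutput U) :=
  Primrec.nat_findGreatest (Primrec.nat_sub.comp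
    (primrec_two_pow.comp (Primrec.succ.comp Primrec.fst)) (Primrec.const 2))
    (primrecRel_isFresh U)

def deepMachine (U : Code) : ℕ →. ℕ := fun input =>
  let s := splitDelimited (natToStr input.unpair.1)
  (Nat.rfind fun t => Part.some (clockHalted U s.2 t)).map
    (freshOutput U (strToNat s.1 + s.2.length))

lemma partrec_deepMachine (U : Code) : Partrec (deepMachine U) := by
  have hs : Primrec fun input : ℕ => splitDelimited (natToStr input.unpair.1) :=
    primrec_splitDelimited.comp (primrec_natToStr.comp (Primrec.fst.comp Primrec.unpair))
  refine Partrec.map (Partrec.rfind ?_) ?_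
  · exact Computable₂.partrec₂ (Primrec₂.to_comp ((primrec_clockHalted U).comp
      (Primrec.snd.comp (hs.comp Primrec.fst)) Primrec.snd))
  · exact ((primrec_freshOutput U).comp (Primrec.nat_add.comp
      (primrec_strToNat.comp (Primrec.fst.comp (hs.comp Primrec.fst)))
      (Primrec.list_length.comp (Primrec.snd.comp (hs.comp Primrec.fst)))) Primrec.snd).to_comp

lemma deepMachine_selfDelimit_append (U : Code) (u r : List Bool) (y : ℕ) :
    deepMachine U (Nat.pair (strToNat (selfDelimit u ++ r)) y) =
      (Nat.rfind fun t => Part.some (clockHalted U r t)).map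
        (freshOutput U (strToNat u + r.length)) := by
  simp [deepMachine, splitDelimited_selfDelimit_append]

lemma exists_clock (U : Code) (l : ℕ) :
    ∃ r T, r.length = l ∧
      Nat.rfind (fun t => Part.some (clockHalted U r t)) = Part.some T ∧
      ∀ p : List Bool, p.length < l → haltsOn U p → halttime U p ≤ T := by
  let S := {p : List Bool | p.length < l ∧ haltsOn U p}
  have hfin : S.Finite := (List.finite_length_lt Bool l).subset fun _ hp => hp.1
  rcases S.eq_empty_or_nonempty with hnone | hsome
  · exact ⟨List.replicate l false, 0, by simp, rfind_clockHalted_replicate U l,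
      fun p hp hhalt => (Set.eq_empty_iff_forall_notMem.1 hnone p ⟨hp, hhalt⟩).elim⟩
  · obtain ⟨q, ⟨hql, hqh⟩, hqmax⟩ := Set.exists_max_image S (halttime U) hfin hsome
    exact ⟨List.replicate (l - 1 - q.length) false ++ true :: q, halttime U q, by simp; omega,
      rfind_clockHalted_marker hqh _, fun p hp hhalt => hqmax p ⟨hp, hhalt⟩⟩

lemma exists_deep_string {U : Code} (hU : Universal U) :
    ∃ c, ∀ d n : ℕ, d ≠ 0 → d < n → ∃ x p₀ : List Bool, ∃ T,
      x.length = n ∧ outputs U p₀ [] x ∧ p₀.length ≤ n - d + 2 * Nat.log 2 d + c ∧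
      (∀ p : List Bool, p.length < n - d → haltsOn U p → halttime U p ≤ T) ∧
      (∀ p : List Bool, p.length < n - 2 → outputs U p [] x → T < halttime U p) := by
  obtain ⟨V, hV⟩ := Nat.Partrec.Code.exists_code.1 (Partrec.nat_iff.1 (partrec_deepMachine U))
  obtain ⟨w, hw⟩ := hU V
  refine ⟨w.length + 3, fun d n hd hdn => ?_⟩
  obtain ⟨r, T, hr, hclock, hshort⟩ := exists_clock U (n - d)
  have hN : strToNat (natToStr d) + r.length = n := by rw [strToNat_natToStr]; omega
  have hVrun : evalS V (selfDelimit (natToStr d) ++ r) [] = Part.some (freshOutput U n T) := by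
    rw [evalS, hV, deepMachine_selfDelimit_append, hclock, Part.map_some, hN]
  have hfresh := isFresh_freshOutput U n T
  refine ⟨natToStr (freshOutput U n T), w ++ (selfDelimit (natToStr d) ++ r), T,
    length_natToStr_freshOutput U n T, ?_, ?_, hshort, fun p hp hout => ?_⟩
  · rw [outputs, hw _ _ (by rw [hVrun]; trivial), hVrun, strToNat_natToStr]
    exact Part.mem_some _
  · have := length_natToStr_le_log hd
    simp only [selfDelimit, List.length_append, List.length_cons, List.length_replicate]
    omega
  · by_contra! hle
    have hrun := evaln_eq_of_halttime_le hout hle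
    rw [strToNat_natToStr] at hrun
    have hcode : strToNat p < 2 ^ (n - 2) - 1 := by
      have := lt_two_pow_length_succ p
      have : 2 ^ (p.length + 1) ≤ 2 ^ (n - 2) := Nat.pow_le_pow_right (by norm_num) (by omega)
      omega
    exact hfresh.2 _ hcode hrun

section Complexity

variable {U : Code} {x p₀ : List Bool} {l m T : ℕ}

lemma Cpx_le_length (h : outputs U p₀ [] x) : Cpx U x ≤ p₀.length :=
  Nat.sInf_le (s := {n | ∃ p : List Bool, p.length = n ∧ outputs U p [] x}) ⟨p₀, rfl, h⟩

lemma exists_outputs_length_eq_Cpx (h : outputs U p₀ [] x) :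
    ∃ p : List Bool, p.length = Cpx U x ∧ outputs U p [] x :=
  Nat.sInf_mem (s := {n | ∃ p : List Bool, p.length = n ∧ outputs U p [] x})
    ⟨p₀.length, p₀, rfl, h⟩

lemma exists_outputs_halttime_eq_ld (h : outputs U p₀ [] x) (c : ℕ) :
    ∃ p : List Bool,
      p.length ≤ Cpx U x + c ∧ outputs U p [] x ∧ halttime U p = ld U c x := by
  obtain ⟨p, hp, hout⟩ := exists_outputs_length_eq_Cpx h
  exact Nat.sInf_mem (s := {t | ∃ p : List Bool, p.length ≤ Cpx U x + c ∧ outputs U p [] x ∧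
    halttime U p = t}) ⟨_, p, by omega, hout, rfl⟩

lemma le_Cpx_of_halttime (h : outputs U p₀ [] x) (hlm : l ≤ m)
    (hshort : ∀ p : List Bool, p.length < l → haltsOn U p → halttime U p ≤ T)
    (hslow : ∀ p : List Bool, p.length < m → outputs U p [] x → T < halttime U p) :
    l ≤ Cpx U x := by
  obtain ⟨p, hp, hout⟩ := exists_outputs_length_eq_Cpx h
  by_contra! hlt
  have := hshort p (by omega) (haltsOn_of_outputs hout)
  have := hslow p (by omega) hout
  omega

lemma le_bbInv_of_halttime {t : ℕ}
    (hshort : ∀ p : List Bool, p.length < l → haltsOn U p → halttime U p ≤ T)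
    (hTt : T < t) (ht : ∃ p : List Bool, haltsOn U p ∧ t ≤ halttime U p) :
    l ≤ bbInv U t := by
  obtain ⟨p₁, hp₁, htime₁⟩ := ht
  obtain ⟨p, hp, hhalt, htime⟩ := Nat.sInf_mem
    (s := {k | ∃ p : List Bool, p.length = k ∧ haltsOn U p ∧ t ≤ halttime U p})
    ⟨_, p₁, rfl, hp₁, htime₁⟩
  by_contra! hlt
  have := hshort p (by rw [bbInv] at hlt; omega) hhalt
  omega

lemma le_ldbb_of_halttime (h : outputs U p₀ [] x) {c : ℕ} (hcm : Cpx U x + c < m)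
    (hshort : ∀ p : List Bool, p.length < l → haltsOn U p → halttime U p ≤ T)
    (hslow : ∀ p : List Bool, p.length < m → outputs U p [] x → T < halttime U p) :
    l ≤ ldbb U c x := by
  obtain ⟨p, hp, hout, htime⟩ := exists_outputs_halttime_eq_ld h c
  exact le_bbInv_of_halttime hshort (htime ▸ hslow p (by omega) hout)
    ⟨p, haltsOn_of_outputs hout, htime.ge⟩

end Complexity

lemma two_mul_log_add_le {c d : ℕ} (hd : 2 * c + 16 ≤ d) : 2 * Nat.log 2 d + c ≤ d := by
  have hpow : 2 ^ Nat.log 2 d ≤ d := Nat.pow_log_le_self 2 (by omega)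
  rcases Nat.lt_or_ge (Nat.log 2 d) 2 with hsmall | hlarge
  · omega
  · have hlt : Nat.log 2 d - 2 < 2 ^ (Nat.log 2 d - 2) := Nat.lt_two_pow_self
    have hsplit : 2 ^ Nat.log 2 d = 2 ^ (Nat.log 2 d - 2) * 2 ^ 2 := by
      rw [← pow_add, Nat.sub_add_cancel hlarge]
    omega

theorem control_ldepth_and_C :
    ∀ U : Nat.Partrec.Code, Universal U →
    ∃ c : ℕ, ∃ D : ℕ, ∀ d : ℕ, D ≤ d → ∀ n : ℕ,
      ∃ x : List Bool, x.length = n ∧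
        (n : ℤ) - d ≤ (Cpx U x : ℤ) ∧
        (n : ℤ) - d ≤ (ldbb U (d - 2 * Nat.log 2 d - c) x : ℤ) := by
  intro U hU
  obtain ⟨c, hdeep⟩ := exists_deep_string hU
  refine ⟨c + 3, 2 * (c + 3) + 16, fun d hd n => ?_⟩
  rcases le_or_gt n d with hnd | hdn
  · exact ⟨List.replicate n false, by simp, by omega, by omega⟩
  obtain ⟨x, p₀, T, hlen, hout, hp₀, hshort, hslow⟩ := hdeep d n (by omega) hdn
  have hlog := two_mul_log_add_le hd
  have hC := le_Cpx_of_halttime hout (by omega : n - d ≤ n - 2) hshort hslow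
  have hD := le_ldbb_of_halttime (c := d - 2 * Nat.log 2 d - (c + 3)) hout
    (by have := Cpx_le_length hout; omega) hshort hslow
  exact ⟨x, hlen, by omega, by omega⟩
end
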